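/- Let 0 < a < b and n ≥ 1, and let x₀ < x₁ < ⋯ < x_n be the points of the Chebyshev alternance for p_{n,a,b} − 1. Then, with ε = ε(n,a,b), the signs are determined: p_{n,a,b}(x_j) = 1 − (−1)^j ε for all j = 0,…,n; in particular p_{n,a,b}(a) = 1 − ε. -/

import Mathlib

/-- `oddPoly n α` is the odd polynomial `α 0 * x + α 1 * x^3 + ⋯ + α (n-1) * x^(2n-1)`.
The functions of this form are exactly the elements of the space `L_n` of odd
polynomials of degree at most `2n-1`. -/
noncomputable def oddPoly (n : ℕ) (α : ℕ → ℝ) : ℝ → ℝ :=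
  fun x => ∑ i ∈ Finset.range n, α i * x ^ (2 * i + 1)

/-- The uniform (Chebyshev) distance `‖f − g‖_{C[a,b]} = sup_{x ∈ [a,b]} |f x − g x|`. -/
noncomputable def unifErr (a b : ℝ) (f g : ℝ → ℝ) : ℝ :=
  sSup ((fun x => |f x - g x|) '' Set.Icc a b)

/-!
Write `p = oddPoly n α`. For every `c`, the polynomial `p - c` has at most `n + 1` nonzero
coefficients, so by Descartes' rule of signs it has at most `n` positive zeros and cannot change
sign `n + 1` times along points of `[0, ∞)`. If `p (x₀) - 1 = ε > 0`, then `p (0) - 1 = -1` and the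
alternance would make `p - 1` change sign at `0 < x₀ < ⋯ < xₙ`. If `p (a) > 1 - ε`, then `a < x₀`,
and for `c` halfway between `1 - ε` and `p (a)` the function `p - c` would change sign at
`a < x₀ < ⋯ < xₙ`.
-/

open Polynomial Matrix

namespace Polynomial

theorem signVariations_lt_card_support {R : Type*} [Semiring R] [LinearOrder R] {P : R[X]}
    (hP : P ≠ 0) : P.signVariations < P.support.card := by
  set nonzeroSigns := (P.coeffList.map SignType.sign).filter (· ≠ 0)
  have hcard : nonzeroSigns.length ≤ P.support.card := by
    set L := (List.range P.degree.succ).reverse.filter (P.coeff · ≠ 0)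
    have hL : nonzeroSigns = L.map (SignType.sign ∘ P.coeff) := by
      simp [nonzeroSigns, L, coeffList, List.filter_map, Function.comp_def]
    have hnodup : L.Nodup := (List.nodup_reverse.2 List.nodup_range).filter _
    rw [hL, List.length_map, ← List.toFinset_card_of_nodup hnodup]
    refine Finset.card_le_card fun i hi => ?_
    simp only [L, List.mem_toFinset, List.mem_filter] at hi
    simpa using hi.2
  have hdestutter := (List.destutter_sublist (· ≠ ·) nonzeroSigns).length_le
  have hpos := Finset.card_pos.2 (support_nonempty.2 hP)
  show (nonzeroSigns.destutter (· ≠ ·)).length - 1 < _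
  omega

end Polynomial

noncomputable def oddPolynomial (n : ℕ) (α : ℕ → ℝ) : ℝ[X] :=
  ∑ i ∈ Finset.range n, C (α i) * X ^ (2 * i + 1)

section OddPolynomial

variable (n : ℕ) (α : ℕ → ℝ)

@[simp]
lemma eval_oddPolynomial (y : ℝ) : (oddPolynomial n α).eval y = oddPoly n α y := by
  simp [oddPolynomial, oddPoly, eval_finsetSum]

lemma continuous_oddPoly : Continuous (oddPoly n α) := by
  simpa only [funext (eval_oddPolynomial n α)] using (oddPolynomial n α).continuous

lemma card_support_oddPolynomial_sub_C_le (c : ℝ) :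
    (oddPolynomial n α - C c).support.card ≤ n + 1 := by
  have hsupp : (oddPolynomial n α - C c).support ⊆
      insert 0 ((Finset.range n).image (fun i => 2 * i + 1)) := by
    intro m hm
    rw [mem_support_iff] at hm
    by_contra hmem
    simp only [Finset.mem_insert, Finset.mem_image, Finset.mem_range, not_or,
      not_exists, not_and] at hmem
    apply hm
    simp only [oddPolynomial, coeff_sub, coeff_C, finsetSum_coeff, coeff_C_mul, coeff_X_pow]
    rw [if_neg hmem.1, Finset.sum_eq_zero, sub_zero]
    intro i hi
    rw [if_neg fun h => hmem.2 i (Finset.mem_range.1 hi) h.symm, mul_zero]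
  calc (oddPolynomial n α - C c).support.card
      ≤ ((Finset.range n).image (fun i => 2 * i + 1)).card + 1 :=
        (Finset.card_le_card hsupp).trans (Finset.card_insert_le _ _)
    _ ≤ n + 1 := by grw [Finset.card_image_le, Finset.card_range]

lemma countP_pos_roots_oddPolynomial_sub_C_le {c : ℝ} (hQ : oddPolynomial n α - C c ≠ 0) :
    (oddPolynomial n α - C c).roots.countP (0 < ·) ≤ n :=
  Nat.lt_succ_iff.1 <| (roots_countP_pos_le_signVariations _).trans_lt <|
    (signVariations_lt_card_support hQ).trans_le (card_support_oddPolynomial_sub_C_le n α c)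

end OddPolynomial

def AlternatesSign {k : ℕ} (f : ℝ → ℝ) (y : Fin (k + 1) → ℝ) : Prop :=
  ∀ i : Fin k, f (y i.succ) * f (y i.castSucc) < 0

namespace AlternatesSign

variable {k : ℕ} {f : ℝ → ℝ}

lemma cons {y₀ : ℝ} {x : Fin (k + 1) → ℝ} (h₀ : f (x 0) * f y₀ < 0)
    (h : AlternatesSign f x) : AlternatesSign f (vecCons y₀ x) := by
  intro i
  cases i using Fin.cases with
  | zero => simpa using h₀
  | succ j => simpa [← Fin.succ_castSucc] using h j

lemma exists_strictMono_zeros {y : Fin (k + 1) → ℝ} (h : AlternatesSign f y)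
    (hf : Continuous f) (hy : StrictMono y) :
    ∃ z : Fin k → ℝ, StrictMono z ∧ ∀ i, z i ∈ Set.Ioo (y i.castSucc) (y i.succ) ∧ f (z i) = 0 := by
  have hzero : ∀ i : Fin k, ∃ t ∈ Set.Ioo (y i.castSucc) (y i.succ), f t = 0 := by
    intro i
    have hlt := hy (Fin.castSucc_lt_succ (i := i))
    rcases mul_neg_iff.1 (h i) with ⟨hsucc, hcast⟩ | ⟨hsucc, hcast⟩
    · exact intermediate_value_Ioo hlt.le hf.continuousOn ⟨hcast, hsucc⟩
    · exact intermediate_value_Ioo' hlt.le hf.continuousOn ⟨hsucc, hcast⟩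
  choose z hzI hz0 using hzero
  refine ⟨z, fun i j hij => ?_, fun i => ⟨hzI i, hz0 i⟩⟩
  calc z i < y i.succ := (hzI i).2
    _ ≤ y j.castSucc := hy.monotone (Fin.succ_le_castSucc_iff.2 hij)
    _ < z j := (hzI j).1

end AlternatesSign

lemma not_alternatesSign_oddPoly_sub (n : ℕ) (α : ℕ → ℝ) (c : ℝ) {y : Fin (n + 2) → ℝ}
    (hy : StrictMono y) (hy₀ : 0 ≤ y 0) : ¬ AlternatesSign (fun t => oddPoly n α t - c) y := by
  intro h
  obtain ⟨z, hz, hzI⟩ :=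
    h.exists_strictMono_zeros ((continuous_oddPoly n α).sub continuous_const) hy
  set Q := oddPolynomial n α - C c
  have hy₀ne : oddPoly n α (y 0) - c ≠ 0 := by
    simpa using right_ne_zero_of_mul (h 0).ne
  have hQ : Q ≠ 0 := fun hQ => hy₀ne <| by
    simpa [Q] using congrArg (eval (y 0)) hQ
  have hzQ : (Finset.univ.val.map z) ≤ Q.roots := by
    refine (Multiset.le_iff_subset (Finset.univ.nodup.map hz.injective)).2 fun t ht => ?_
    obtain ⟨i, -, rfl⟩ := Multiset.mem_map.1 ht
    simpa [Q, mem_roots hQ] using (hzI i).2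
  have hzpos : ∀ t ∈ (Finset.univ.val.map z), 0 < t := by
    intro t ht
    obtain ⟨i, -, rfl⟩ := Multiset.mem_map.1 ht
    exact hy₀.trans_lt ((hy.monotone (Fin.zero_le _)).trans_lt (hzI i).1.1)
  have hcount := (Multiset.countP_le_of_le (0 < ·) hzQ).trans
    (countP_pos_roots_oddPolynomial_sub_C_le n α hQ)
  rw [Multiset.countP_eq_card.2 hzpos] at hcount
  simp at hcount

lemma alternatesSign_sub_of_equioscillation {k : ℕ} {g : ℝ → ℝ} {x : Fin (k + 1) → ℝ} {c c' ε : ℝ}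
    (halt : ∀ j : Fin k, g (x j.succ) - c = -(g (x j.castSucc) - c))
    (habs : ∀ j, |g (x j) - c| = ε) (hc : |c - c'| < ε) :
    AlternatesSign (fun t => g t - c') x := by
  intro j
  have hsq : (g (x j.castSucc) - c) ^ 2 = ε ^ 2 := by rw [← sq_abs, habs]
  have hc' : (c - c') ^ 2 < ε ^ 2 := by
    rw [← sq_abs (c - c')]
    exact pow_lt_pow_left₀ hc (abs_nonneg _) two_ne_zero
  have hprod : (g (x j.succ) - c') * (g (x j.castSucc) - c') =
      (c - c') ^ 2 - (g (x j.castSucc) - c) ^ 2 := by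
    rw [show g (x j.succ) - c' = (g (x j.succ) - c) + (c - c') by ring, halt j]
    ring
  show (g (x j.succ) - c') * (g (x j.castSucc) - c') < 0
  linarith

lemma eq_neg_one_pow_mul_of_forall_succ_eq_neg {k : ℕ} {u : Fin (k + 1) → ℝ}
    (h : ∀ j : Fin k, u j.succ = -u j.castSucc) (j : Fin (k + 1)) :
    u j = (-1) ^ (j : ℕ) * u 0 := by
  induction j using Fin.induction with
  | zero => simp
  | succ j ih => rw [h j, ih, Fin.val_succ, Fin.val_castSucc, pow_succ]; ring

section Alternance

variable {n : ℕ} {α : ℕ → ℝ} {x : Fin (n + 1) → ℝ} {ε : ℝ}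

lemma oddPoly_sub_one_alternance_zero (hmono : StrictMono x) (hx₀ : 0 < x 0)
    (habs : ∀ j, |oddPoly n α (x j) - 1| = ε)
    (halt : ∀ j : Fin n, oddPoly n α (x j.succ) - 1 = -(oddPoly n α (x j.castSucc) - 1)) :
    oddPoly n α (x 0) - 1 = -ε := by
  suffices oddPoly n α (x 0) - 1 ≤ 0 by rw [← habs 0, abs_of_nonpos this, neg_neg]
  by_contra! hpos
  have hp0 : oddPoly n α 0 = 0 := by simp [oddPoly]
  refine not_alternatesSign_oddPoly_sub n α 1 (strictMono_vecCons.2 ⟨hx₀, hmono⟩) le_rfl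
    (.cons ?_ (alternatesSign_sub_of_equioscillation halt habs ?_))
  · show (oddPoly n α (x 0) - 1) * (oddPoly n α 0 - 1) < 0
    rw [hp0]
    linarith
  · rwa [sub_self, abs_zero, ← habs 0, abs_of_pos hpos]

lemma oddPoly_eq_one_sub_of_alternance {a : ℝ} (ha : 0 ≤ a) (hax : a ≤ x 0)
    (hmono : StrictMono x) (hpa : |oddPoly n α a - 1| ≤ ε)
    (habs : ∀ j, |oddPoly n α (x j) - 1| = ε)
    (halt : ∀ j : Fin n, oddPoly n α (x j.succ) - 1 = -(oddPoly n α (x j.castSucc) - 1))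
    (hx₀ : oddPoly n α (x 0) - 1 = -ε) :
    oddPoly n α a = 1 - ε := by
  set p := oddPoly n α
  by_contra hne
  have hgt : 1 - ε < p a := lt_of_le_of_ne (by linarith [neg_abs_le (p a - 1)]) (Ne.symm hne)
  have hax' : a < x 0 := lt_of_le_of_ne hax fun h => by rw [← h] at hx₀; linarith
  refine not_alternatesSign_oddPoly_sub n α ((p a + (1 - ε)) / 2)
    (strictMono_vecCons.2 ⟨hax', hmono⟩) ha
    (.cons ?_ (alternatesSign_sub_of_equioscillation halt habs ?_))
  · show (p (x 0) - _) * (p a - _) < 0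
    nlinarith
  · rw [abs_lt]
    constructor <;> linarith [le_abs_self (p a - 1)]

end Alternance

lemma abs_sub_le_unifErr {a b y : ℝ} {f g : ℝ → ℝ} (hf : ContinuousOn f (Set.Icc a b))
    (hg : ContinuousOn g (Set.Icc a b)) (hy : y ∈ Set.Icc a b) :
    |f y - g y| ≤ unifErr a b f g :=
  le_csSup (isCompact_Icc.bddAbove_image (hf.sub hg).abs) ⟨y, hy, rfl⟩

theorem alternance_signs_general (n : ℕ) (a b : ℝ) (ha : 0 < a)
    (α : ℕ → ℝ)
    (x : Fin (n + 1) → ℝ) (hmono : StrictMono x) (hmem : ∀ j, x j ∈ Set.Icc a b)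
    (habs : ∀ j, |oddPoly n α (x j) - 1| = unifErr a b (fun _ => (1:ℝ)) (oddPoly n α))
    (halt : ∀ j : Fin n,
      oddPoly n α (x j.succ) - 1 = -(oddPoly n α (x j.castSucc) - 1)) :
    (∀ j : Fin (n + 1), oddPoly n α (x j)
        = 1 - (-1 : ℝ) ^ (j : ℕ) * unifErr a b (fun _ => (1:ℝ)) (oddPoly n α)) ∧
    oddPoly n α a = 1 - unifErr a b (fun _ => (1:ℝ)) (oddPoly n α) := by
  set ε := unifErr a b (fun _ => (1:ℝ)) (oddPoly n α)
  have hx₀ : oddPoly n α (x 0) - 1 = -ε :=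
    oddPoly_sub_one_alternance_zero hmono (ha.trans_le (hmem 0).1) habs halt
  have hpa : |oddPoly n α a - 1| ≤ ε := abs_sub_comm 1 (oddPoly n α a) ▸
    abs_sub_le_unifErr continuousOn_const (continuous_oddPoly n α).continuousOn
      ⟨le_rfl, (hmem 0).1.trans (hmem 0).2⟩
  refine ⟨fun j => ?_, oddPoly_eq_one_sub_of_alternance ha.le (hmem 0).1 hmono hpa habs halt hx₀⟩
  have hj := eq_neg_one_pow_mul_of_forall_succ_eq_neg (u := fun j => oddPoly n α (x j) - 1) halt j
  rw [hx₀] at hj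
  linarith

/-- For the points `x₀ < ⋯ < x_n` of the Chebyshev alternance for
`p_{n,a,b} − 1`, the signs are determined: `p_{n,a,b}(x_j) = 1 − (−1)^j ε` where
`ε = ε(n,a,b)`; in particular `p_{n,a,b}(a) = 1 − ε`. -/
theorem alternance_signs (n : ℕ) (hn : 1 ≤ n) (a b : ℝ) (ha : 0 < a) (hab : a < b)
    (α : ℕ → ℝ)
    (hbest : ∀ β : ℕ → ℝ,
      unifErr a b (fun _ => (1:ℝ)) (oddPoly n α) ≤ unifErr a b (fun _ => (1:ℝ)) (oddPoly n β))
    (x : Fin (n + 1) → ℝ) (hmono : StrictMono x) (hmem : ∀ j, x j ∈ Set.Icc a b)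
    (habs : ∀ j, |oddPoly n α (x j) - 1| = unifErr a b (fun _ => (1:ℝ)) (oddPoly n α))
    (halt : ∀ j : Fin n,
      oddPoly n α (x j.succ) - 1 = -(oddPoly n α (x j.castSucc) - 1)) :
    (∀ j : Fin (n + 1), oddPoly n α (x j)
        = 1 - (-1 : ℝ) ^ (j : ℕ) * unifErr a b (fun _ => (1:ℝ)) (oddPoly n α)) ∧
    oddPoly n α a = 1 - unifErr a b (fun _ => (1:ℝ)) (oddPoly n α) :=
  alternance_signs_general n a b ha α x hmono hmem habs halt
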